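/- arXiv:1210.0487 — 4 statements merged into one kernel-verified Lean document; each statement's English description precedes it below -/
import Mathlib

section
/- The function g₀(ζ) := ∫_ζ^1 √(t^{−2} − 1) dt − (1−ζ²)^{3/2}/(2−ζ²) is differentiable on (0,1) with derivative g₀'(ζ) = 2·√(1−ζ²)·( 2 − (2−ζ²)² ) / ( ζ·(2−ζ²)² ) for all ζ ∈ (0,1). -/
/-- The leading-order criticality function
`g₀(ζ) = ∫_ζ^1 √(t^{−2}−1) dt − (1−ζ²)^{3/2}/(2−ζ²)`. -/
noncomputable def g0 (ζ : ℝ) : ℝ :=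
  (∫ t in ζ..(1 : ℝ), Real.sqrt (1 / t ^ 2 - 1)) - (1 - ζ ^ 2) ^ ((3 : ℝ) / 2) / (2 - ζ ^ 2)

/-! By the fundamental theorem of calculus the integral term has derivative `-√(1-ζ²)/ζ`.
Since `d/dx x^{3/2} = (3/2)√x`, the quotient rule gives `-ζ√(1-ζ²)(4-ζ²)/(2-ζ²)²` for the
second term, and `-(2-ζ²)² + ζ²(4-ζ²) = 2(2-(2-ζ²)²)` combines the two. -/

open Real Set

lemma continuousOn_sqrt_one_div_sq_sub_one :
    ContinuousOn (fun t : ℝ => √(1 / t ^ 2 - 1)) (Ioi 0) := by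
  intro t ht
  exact (continuous_sqrt.continuousAt.comp
    (by fun_prop (disch := exact pow_ne_zero 2 (ne_of_gt ht)))).continuousWithinAt

lemma sqrt_one_div_sq_sub_one {t : ℝ} (ht : 0 < t) : √(1 / t ^ 2 - 1) = √(1 - t ^ 2) / t := by
  rw [← Real.sqrt_sq ht.le, ← Real.sqrt_div' _ (sq_nonneg t), Real.sqrt_sq ht.le]
  congr 1
  field_simp

lemma hasDerivAt_integral_sqrt_one_div_sq_sub_one {ζ : ℝ} (hζ : 0 < ζ) :
    HasDerivAt (fun u => ∫ t in u..(1 : ℝ), √(1 / t ^ 2 - 1)) (-(√(1 - ζ ^ 2) / ζ)) ζ := by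
  have hcont := continuousOn_sqrt_one_div_sq_sub_one
  have hsub : uIcc ζ 1 ⊆ Ioi 0 := fun t ht => lt_of_lt_of_le (lt_min hζ one_pos) ht.1
  rw [← sqrt_one_div_sq_sub_one hζ]
  exact intervalIntegral.integral_hasDerivAt_left ((hcont.mono hsub).intervalIntegrable)
    (hcont.stronglyMeasurableAtFilter isOpen_Ioi ζ hζ) (hcont.continuousAt (Ioi_mem_nhds hζ))

lemma hasDerivAt_rpow_three_halves (x : ℝ) :
    HasDerivAt (fun x : ℝ => x ^ (3 / 2 : ℝ)) (3 / 2 * √x) x := by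
  convert Real.hasDerivAt_rpow_const (x := x) (p := 3 / 2) (Or.inr (by norm_num)) using 2
  rw [Real.sqrt_eq_rpow]
  norm_num

lemma rpow_three_halves_eq_mul_sqrt {x : ℝ} (hx : 0 ≤ x) : x ^ (3 / 2 : ℝ) = x * √x := by
  rw [Real.sqrt_eq_rpow, ← Real.rpow_one_add' hx (by norm_num)]
  norm_num

lemma hasDerivAt_one_sub_sq_rpow_div_two_sub_sq {ζ : ℝ} (hζ : ζ ^ 2 ≤ 1) :
    HasDerivAt (fun x : ℝ => (1 - x ^ 2) ^ (3 / 2 : ℝ) / (2 - x ^ 2))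
      (-(ζ * √(1 - ζ ^ 2) * (4 - ζ ^ 2) / (2 - ζ ^ 2) ^ 2)) ζ := by
  have hsq (c : ℝ) : HasDerivAt (fun x : ℝ => c - x ^ 2) (-(2 * ζ)) ζ := by
    simpa using (hasDerivAt_pow 2 ζ).const_sub c
  have h2 : 2 - ζ ^ 2 ≠ 0 := by nlinarith
  refine (((hasDerivAt_rpow_three_halves _).comp ζ (hsq 1)).div (hsq 2) h2).congr_deriv ?_
  rw [Function.comp_apply, rpow_three_halves_eq_mul_sqrt (by linarith)]
  field_simp
  ring

/-- `g₀` is differentiable on `(0,1)` with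
`g₀'(ζ) = 2√(1−ζ²)(2−(2−ζ²)²)/(ζ(2−ζ²)²)`. -/
theorem stmt7 :
    ∀ ζ ∈ Set.Ioo (0 : ℝ) 1,
      HasDerivAt g0
        (2 * Real.sqrt (1 - ζ ^ 2) * (2 - (2 - ζ ^ 2) ^ 2) / (ζ * (2 - ζ ^ 2) ^ 2)) ζ := by
  rintro ζ ⟨hζ0, hζ1⟩
  have h2 : 2 - ζ ^ 2 ≠ 0 := by nlinarith
  refine ((hasDerivAt_integral_sqrt_one_div_sq_sub_one hζ0).sub
    (hasDerivAt_one_sub_sq_rpow_div_two_sub_sq (by nlinarith))).congr_deriv ?_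
  field_simp
  ring
end

section
/- With g₀(ζ) := ∫_ζ^1 √(t^{−2} − 1) dt − (1−ζ²)^{3/2}/(2−ζ²): g₀ is strictly decreasing on the interval (0, √(2−√2)) and strictly increasing on (√(2−√2), 1). -/
lemma g0_hasDerivAt {ζ : ℝ} (h0 : 0 < ζ) (h1 : ζ < 1) :
    HasDerivAt g0
      (Real.sqrt (1 - ζ ^ 2) * (ζ ^ 2 * (4 - ζ ^ 2) - (2 - ζ ^ 2) ^ 2) /
        (ζ * (2 - ζ ^ 2) ^ 2)) ζ := by
  have hζ2 : ζ ^ 2 < 1 := by nlinarith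
  have h1m : (0:ℝ) < 1 - ζ ^ 2 := by linarith
  have h2m : (0:ℝ) < 2 - ζ ^ 2 := by linarith
  set f : ℝ → ℝ := fun t => Real.sqrt (1 / t ^ 2 - 1) with hfdef
  -- measurability of f
  have hmeas : Measurable f := by
    apply Real.continuous_sqrt.measurable.comp
    exact (measurable_const.div ((measurable_id.pow_const 2))).sub measurable_const
  -- integrability of f on [ζ, 1]
  have hint : IntervalIntegrable f MeasureTheory.volume ζ 1 := by
    apply ContinuousOn.intervalIntegrable
    apply Real.continuous_sqrt.comp_continuousOn
    apply ContinuousOn.sub _ continuousOn_const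
    apply ContinuousOn.div continuousOn_const (by fun_prop)
    intro t ht
    rw [Set.uIcc_of_le h1.le] at ht
    have : 0 < t := lt_of_lt_of_le h0 ht.1
    positivity
  -- continuity of f at ζ
  have hca : ContinuousAt f ζ := by
    apply Real.continuous_sqrt.continuousAt.comp
    apply ContinuousAt.sub _ continuousAt_const
    exact ContinuousAt.div continuousAt_const (by fun_prop) (by positivity)
  -- derivative of the integral term
  have Hint : HasDerivAt (fun u => ∫ t in u..(1:ℝ), f t) (-f ζ) ζ :=
    intervalIntegral.integral_hasDerivAt_left hint
      hmeas.aestronglyMeasurable.stronglyMeasurableAtFilter hca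
  -- derivative of the algebraic term
  have hb : HasDerivAt (fun x : ℝ => 1 - x ^ 2) (-(2 * ζ)) ζ := by
    simpa using (hasDerivAt_pow 2 ζ).const_sub 1
  have hb2 : HasDerivAt (fun x : ℝ => 2 - x ^ 2) (-(2 * ζ)) ζ := by
    simpa using (hasDerivAt_pow 2 ζ).const_sub 2
  have hrpow : HasDerivAt (fun x : ℝ => (1 - x ^ 2) ^ ((3:ℝ)/2))
      (((3:ℝ)/2 * (1 - ζ ^ 2) ^ ((3:ℝ)/2 - 1)) * (-(2 * ζ))) ζ := by
    exact HasDerivAt.comp ζ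
      (Real.hasDerivAt_rpow_const (p := (3:ℝ)/2) (Or.inl h1m.ne')) hb
  have Hq : HasDerivAt (fun x : ℝ => (1 - x ^ 2) ^ ((3:ℝ)/2) / (2 - x ^ 2))
      (((((3:ℝ)/2 * (1 - ζ ^ 2) ^ ((3:ℝ)/2 - 1)) * (-(2 * ζ))) * (2 - ζ ^ 2)
        - (1 - ζ ^ 2) ^ ((3:ℝ)/2) * (-(2 * ζ))) / (2 - ζ ^ 2) ^ 2) ζ :=
    hrpow.div hb2 h2m.ne'
  have H := Hint.sub Hq
  -- identify the derivative value
  set s := Real.sqrt (1 - ζ ^ 2) with hs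
  have hspos : 0 < s := Real.sqrt_pos.mpr h1m
  have hs2 : s ^ 2 = 1 - ζ ^ 2 := Real.sq_sqrt h1m.le
  have hfz : f ζ = s / ζ := by
    show Real.sqrt (1 / ζ ^ 2 - 1) = s / ζ
    have : 1 / ζ ^ 2 - 1 = (1 - ζ ^ 2) / ζ ^ 2 := by field_simp
    rw [this, Real.sqrt_div h1m.le, Real.sqrt_sq h0.le]
  have hhalf : (1 - ζ ^ 2) ^ ((3:ℝ)/2 - 1) = s := by
    norm_num
    rw [hs, Real.sqrt_eq_rpow]
  have h32 : (1 - ζ ^ 2) ^ ((3:ℝ)/2) = (1 - ζ ^ 2) * s := by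
    have : ((3:ℝ)/2) = 1 + 1/2 := by norm_num
    rw [this, Real.rpow_add h1m, Real.rpow_one, hs, Real.sqrt_eq_rpow]
  have heq : -f ζ -
      (((((3:ℝ)/2 * (1 - ζ ^ 2) ^ ((3:ℝ)/2 - 1)) * (-(2 * ζ))) * (2 - ζ ^ 2)
        - (1 - ζ ^ 2) ^ ((3:ℝ)/2) * (-(2 * ζ))) / (2 - ζ ^ 2) ^ 2)
      = s * (ζ ^ 2 * (4 - ζ ^ 2) - (2 - ζ ^ 2) ^ 2) / (ζ * (2 - ζ ^ 2) ^ 2) := by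
    rw [hfz, hhalf, h32]
    field_simp
    ring
  rw [heq] at H
  exact H

lemma aux_pos : (0:ℝ) < 2 - Real.sqrt 2 := by
  nlinarith [Real.sq_sqrt (by norm_num : (2:ℝ) ≥ 0), Real.sqrt_nonneg 2]

lemma aux_lt_one : Real.sqrt (2 - Real.sqrt 2) < 1 := by
  rw [show (1:ℝ) = Real.sqrt 1 by simp]
  apply Real.sqrt_lt_sqrt aux_pos.le
  nlinarith [Real.sq_sqrt (by norm_num : (2:ℝ) ≥ 0), Real.sqrt_nonneg 2]

/-- `g₀` is strictly decreasing on `(0, √(2−√2))` and strictly increasing on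
`(√(2−√2), 1)`. -/
theorem stmt8 :
    StrictAntiOn g0 (Set.Ioo (0 : ℝ) (Real.sqrt (2 - Real.sqrt 2)))
      ∧ StrictMonoOn g0 (Set.Ioo (Real.sqrt (2 - Real.sqrt 2)) 1) := by
  have hsq2 : Real.sqrt 2 ^ 2 = 2 := Real.sq_sqrt (by norm_num)
  have hsq2pos : (1:ℝ) < Real.sqrt 2 := by nlinarith [Real.sqrt_nonneg 2]
  have hsub : Set.Ioo (0 : ℝ) (Real.sqrt (2 - Real.sqrt 2)) ⊆ Set.Ioo (0:ℝ) 1 :=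
    Set.Ioo_subset_Ioo le_rfl aux_lt_one.le
  have hsub2 : Set.Ioo (Real.sqrt (2 - Real.sqrt 2)) 1 ⊆ Set.Ioo (0:ℝ) 1 :=
    Set.Ioo_subset_Ioo (Real.sqrt_nonneg _) le_rfl
  have hcont : ∀ x ∈ Set.Ioo (0:ℝ) 1, ContinuousAt g0 x := fun x hx =>
    (g0_hasDerivAt hx.1 hx.2).continuousAt
  constructor
  · apply strictAntiOn_of_deriv_neg (convex_Ioo _ _)
      (fun x hx => (hcont x (hsub hx)).continuousWithinAt)
    rw [interior_Ioo]
    intro x hx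
    obtain ⟨hx0, hxa⟩ := hx
    have hx1 : x < 1 := hxa.trans_le aux_lt_one.le
    rw [(g0_hasDerivAt hx0 hx1).deriv]
    have hx2 : x ^ 2 < 2 - Real.sqrt 2 := (Real.lt_sqrt hx0.le).mp hxa
    have h1m : (0:ℝ) < 1 - x ^ 2 := by nlinarith
    have h2m : (0:ℝ) < 2 - x ^ 2 := by linarith
    apply div_neg_of_neg_of_pos
    · apply mul_neg_of_pos_of_neg (Real.sqrt_pos.mpr h1m)
      nlinarith
    · positivity
  · apply strictMonoOn_of_deriv_pos (convex_Ioo _ _)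
      (fun x hx => (hcont x (hsub2 hx)).continuousWithinAt)
    rw [interior_Ioo]
    intro x hx
    obtain ⟨hxa, hx1⟩ := hx
    have hx0 : 0 < x := lt_of_le_of_lt (Real.sqrt_nonneg _) hxa
    rw [(g0_hasDerivAt hx0 hx1).deriv]
    have hx2 : 2 - Real.sqrt 2 < x ^ 2 := (Real.sqrt_lt' hx0).mp hxa
    have hx2' : x ^ 2 < 1 := by nlinarith
    have h1m : (0:ℝ) < 1 - x ^ 2 := by linarith
    have h2m : (0:ℝ) < 2 - x ^ 2 := by linarith
    apply div_pos
    · apply mul_pos (Real.sqrt_pos.mpr h1m)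
      nlinarith
    · positivity
end

section
/- With g₀(ζ) := ∫_ζ^1 √(t^{−2} − 1) dt − (1−ζ²)^{3/2}/(2−ζ²) and ζ₀ its unique zero in (0, √(2−√2)): g₀(0.58) > 0 and g₀(0.59) < 0, hence 0.58 < ζ₀ < 0.59. -/
open Real Set

noncomputable def arsech (x : ℝ) : ℝ := log ((1 + √(1 - x ^ 2)) / x)

lemma hasDerivAt_sqrt_one_sub_sq {x : ℝ} (hx : x ^ 2 < 1) :
    HasDerivAt (fun t ↦ √(1 - t ^ 2)) (-x / √(1 - x ^ 2)) x := by
  have hpos : 0 < 1 - x ^ 2 := by linarith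
  convert ((hasDerivAt_pow 2 x).const_sub 1).sqrt hpos.ne' using 1
  field_simp
  ring

lemma hasDerivAt_arsech {x : ℝ} (hx₀ : 0 < x) (hx₁ : x < 1) :
    HasDerivAt arsech (-1 / (x * √(1 - x ^ 2))) x := by
  have hpos : 0 < 1 - x ^ 2 := by nlinarith
  have hs : 0 < √(1 - x ^ 2) := sqrt_pos.2 hpos
  have hsq : √(1 - x ^ 2) ^ 2 = 1 - x ^ 2 := sq_sqrt hpos.le
  have hu := ((hasDerivAt_sqrt_one_sub_sq (by nlinarith)).const_add 1).fun_div (hasDerivAt_id' x)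
    hx₀.ne'
  refine (hu.log (by positivity)).congr_deriv ?_
  field_simp
  linear_combination (-1) * hsq

lemma hasDerivAt_arsech_sub_sqrt {x : ℝ} (hx₀ : 0 < x) (hx₁ : x < 1) :
    HasDerivAt (fun t ↦ arsech t - √(1 - t ^ 2)) (-(√(1 - x ^ 2) / x)) x := by
  have hpos : 0 < 1 - x ^ 2 := by nlinarith
  have hs : 0 < √(1 - x ^ 2) := sqrt_pos.2 hpos
  have hsq : √(1 - x ^ 2) ^ 2 = 1 - x ^ 2 := sq_sqrt hpos.le
  refine ((hasDerivAt_arsech hx₀ hx₁).fun_sub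
    (hasDerivAt_sqrt_one_sub_sq (by nlinarith))).congr_deriv ?_
  field_simp
  linear_combination hsq

lemma continuousOn_arsech_sub_sqrt {a : ℝ} (ha : 0 < a) :
    ContinuousOn (fun t ↦ arsech t - √(1 - t ^ 2)) (Ici a) := by
  unfold arsech
  refine ContinuousOn.sub (ContinuousOn.log ?_ fun x hx ↦ ?_) (by fun_prop)
  · exact ContinuousOn.div (by fun_prop) continuousOn_id fun x hx ↦ (ha.trans_le hx).ne'
  · have : 0 < x := ha.trans_le hx
    positivity

lemma integral_sqrt_one_div_sq_sub_one {ζ : ℝ} (h₀ : 0 < ζ) (h₁ : ζ ≤ 1) :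
    ∫ t in ζ..1, √(1 / t ^ 2 - 1) = arsech ζ - √(1 - ζ ^ 2) := by
  have hderiv : ∀ x ∈ Ioo ζ 1, HasDerivAt (fun t ↦ -(arsech t - √(1 - t ^ 2)))
      (√(1 / x ^ 2 - 1)) x := fun x hx ↦ by
    rw [sqrt_one_div_sq_sub_one (h₀.trans hx.1), ← neg_neg (√(1 - x ^ 2) / x)]
    exact (hasDerivAt_arsech_sub_sqrt (h₀.trans hx.1) hx.2).neg
  have hint : IntervalIntegrable (fun t ↦ √(1 / t ^ 2 - 1)) MeasureTheory.volume ζ 1 := by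
    refine ContinuousOn.intervalIntegrable ?_
    rw [uIcc_of_le h₁]
    exact ContinuousOn.sqrt (ContinuousOn.sub (continuousOn_const.div (continuousOn_pow 2)
      fun x hx ↦ pow_ne_zero 2 (h₀.trans_le hx.1).ne') continuousOn_const)
  rw [intervalIntegral.integral_eq_sub_of_hasDerivAt_of_le h₁
    ((continuousOn_arsech_sub_sqrt h₀).neg.mono Icc_subset_Ici_self) hderiv hint]
  simp [arsech]

lemma g0_eq {ζ : ℝ} (h₀ : 0 < ζ) (h₁ : ζ ≤ 1) :
    g0 ζ = arsech ζ - √(1 - ζ ^ 2) - (1 - ζ ^ 2) * √(1 - ζ ^ 2) / (2 - ζ ^ 2) := by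
  have h : (0 : ℝ) ≤ 1 - ζ ^ 2 := by nlinarith
  rw [g0, integral_sqrt_one_div_sq_sub_one h₀ h₁, show (3 : ℝ) / 2 = 1 + 1 / 2 by norm_num,
    rpow_add' h (by norm_num), rpow_one, ← sqrt_eq_rpow]

lemma hasDerivAt_g0 {x : ℝ} (hx₀ : 0 < x) (hx₁ : x < 1) :
    HasDerivAt g0 (-2 * √(1 - x ^ 2) * ((2 - x ^ 2) ^ 2 - 2) / (x * (2 - x ^ 2) ^ 2)) x := by
  have hpos : 0 < 1 - x ^ 2 := by nlinarith
  have hv : 0 < 2 - x ^ 2 := by linarith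
  have hs : 0 < √(1 - x ^ 2) := sqrt_pos.2 hpos
  have hsq : √(1 - x ^ 2) ^ 2 = 1 - x ^ 2 := sq_sqrt hpos.le
  have hq := (((hasDerivAt_pow 2 x).const_sub 1).fun_mul (hasDerivAt_sqrt_one_sub_sq
    (by nlinarith))).fun_div ((hasDerivAt_pow 2 x).const_sub 2) hv.ne'
  have hg := (hasDerivAt_arsech_sub_sqrt hx₀ hx₁).fun_sub hq
  have heq : (fun t ↦ arsech t - √(1 - t ^ 2) - (1 - t ^ 2) * √(1 - t ^ 2) / (2 - t ^ 2))
      =ᶠ[nhds x] g0 :=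
    Filter.eventually_of_mem (Ioo_mem_nhds hx₀ hx₁) fun t ht ↦ (g0_eq ht.1 ht.2.le).symm
  refine (hg.congr_of_eventuallyEq heq.symm).congr_deriv ?_
  field_simp
  linear_combination (x ^ 4 - 2 * x ^ 2) * hsq

lemma two_lt_sq_two_sub_sq {x : ℝ} (hx₀ : 0 < x) (hx : x < √(2 - √2)) : 2 < (2 - x ^ 2) ^ 2 := by
  have hx2 : x ^ 2 < 2 - √2 := (lt_sqrt hx₀.le).1 hx
  have h2 : √2 ^ 2 = 2 := sq_sqrt zero_le_two
  nlinarith [sqrt_nonneg 2]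

lemma sqrt_two_sub_sqrt_two_lt_one : √(2 - √2) < 1 :=
  (sqrt_lt' one_pos).2 (by linarith [one_lt_sqrt_two])

lemma g0_strictAntiOn : StrictAntiOn g0 (Ioo 0 √(2 - √2)) := by
  have hderiv : ∀ x ∈ Ioo 0 √(2 - √2), HasDerivAt g0
      (-2 * √(1 - x ^ 2) * ((2 - x ^ 2) ^ 2 - 2) / (x * (2 - x ^ 2) ^ 2)) x :=
    fun x hx ↦ hasDerivAt_g0 hx.1 (hx.2.trans sqrt_two_sub_sqrt_two_lt_one)
  refine strictAntiOn_of_hasDerivWithinAt_neg (convex_Ioo _ _)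
    (fun x hx ↦ (hderiv x hx).continuousAt.continuousWithinAt)
    (fun x hx ↦ (hderiv x (interior_subset hx)).hasDerivWithinAt) fun x hx ↦ ?_
  rw [interior_Ioo] at hx
  have hx₁ : x < 1 := hx.2.trans sqrt_two_sub_sqrt_two_lt_one
  have hs : 0 < √(1 - x ^ 2) := sqrt_pos.2 (by nlinarith [hx.1])
  have hq := two_lt_sq_two_sub_sq hx.1 hx.2
  have hv : 0 < 2 - x ^ 2 := by nlinarith [hx.1]
  refine div_neg_of_neg_of_pos ?_ (by have := hx.1; positivity)
  nlinarith [mul_pos hs (sub_pos.2 hq)]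

lemma g0_058_pos : 0 < g0 0.58 := by
  rw [g0_eq (by norm_num) (by norm_num), arsech,
    show (1 : ℝ) - 0.58 ^ 2 = 0.6636 by norm_num, show (2 : ℝ) - 0.58 ^ 2 = 1.6636 by norm_num]
  set s := √0.6636
  have hs : (0.8146164 : ℝ) ≤ s := (le_sqrt (by norm_num) (by norm_num)).2 (by norm_num)
  have hs' : s ≤ 0.8146165 := (sqrt_le_left (by norm_num)).2 (by norm_num)
  have hexp : exp 1.1395622 < 1.8146164 / 0.58 := by
    -- `exp_bound'` needs an argument in `[0, 1]`, hence the halving.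
    have h := exp_bound' (x := 0.5697811) (by norm_num) (by norm_num) (n := 7) (by norm_num)
    norm_num [Finset.sum_range_succ, Nat.factorial] at h
    rw [show (1.1395622 : ℝ) = 0.5697811 + 0.5697811 by norm_num, exp_add]
    nlinarith [exp_pos 0.5697811]
  have hlog : 1.1395622 < log ((1 + s) / 0.58) :=
    (lt_log_iff_exp_lt (by positivity)).2 (hexp.trans_le (by gcongr; linarith))
  have hrat : s + 0.6636 * s / 1.6636 ≤ 1.1395622 := by
    rw [show s + 0.6636 * s / 1.6636 = 2.3272 * s / 1.6636 by ring, div_le_iff₀ (by norm_num)]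
    linarith
  linarith

lemma g0_059_neg : g0 0.59 < 0 := by
  rw [g0_eq (by norm_num) (by norm_num), arsech,
    show (1 : ℝ) - 0.59 ^ 2 = 0.6519 by norm_num, show (2 : ℝ) - 0.59 ^ 2 = 1.6519 by norm_num]
  set s := √0.6519
  have hs : (0.8074032 : ℝ) ≤ s := (le_sqrt (by norm_num) (by norm_num)).2 (by norm_num)
  have hs' : s ≤ 0.8074033 := (sqrt_le_left (by norm_num)).2 (by norm_num)
  have hexp : 1.8074033 / 0.59 < exp 1.1260339 := by
    have h := sum_le_exp_of_nonneg (x := 1.1260339) (by norm_num) 9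
    norm_num [Finset.sum_range_succ, Nat.factorial] at h
    linarith
  have hlog : log ((1 + s) / 0.59) < 1.1260339 :=
    (log_lt_iff_lt_exp (by positivity)).2 ((by gcongr; linarith : (1 + s) / 0.59 ≤ _).trans_lt hexp)
  have hrat : 1.1260339 ≤ s + 0.6519 * s / 1.6519 := by
    rw [show s + 0.6519 * s / 1.6519 = 2.3038 * s / 1.6519 by ring, le_div_iff₀ (by norm_num)]
    linarith
  linarith

/-- `g₀(0.58) > 0` and `g₀(0.59) < 0`, hence the unique zero `ζ₀` of `g₀` in
`(0, √(2−√2))` satisfies `0.58 < ζ₀ < 0.59`. -/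
theorem stmt10 :
    g0 0.58 > 0 ∧ g0 0.59 < 0
      ∧ ∀ ζ₀ ∈ Set.Ioo (0 : ℝ) (Real.sqrt (2 - Real.sqrt 2)),
          g0 ζ₀ = 0 → 0.58 < ζ₀ ∧ ζ₀ < 0.59 := by
  have hmem : ∀ x : ℝ, 0 < x → x ^ 2 < 1 / 2 → x ∈ Ioo 0 √(2 - √2) := fun x hx₀ hx ↦
    ⟨hx₀, (lt_sqrt hx₀.le).2 (by linarith [sqrt_two_lt_three_halves])⟩
  refine ⟨g0_058_pos, g0_059_neg, fun ζ hζ hzero ↦ ⟨?_, ?_⟩⟩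
  · exact (g0_strictAntiOn.lt_iff_gt hζ (hmem _ (by norm_num) (by norm_num))).1
      (hzero ▸ g0_058_pos)
  · exact (g0_strictAntiOn.lt_iff_gt (hmem _ (by norm_num) (by norm_num)) hζ).1
      (hzero ▸ g0_059_neg)
end

section
/- Let ζ₀ ∈ (0, √(2−√2)) be the unique zero of g₀(ζ) := ∫_ζ^1 √(t^{−2} − 1) dt − (1−ζ²)^{3/2}/(2−ζ²) in that interval, and define l₀ := ζ₀²/√(1−ζ₀²). Then 0.415 < l₀ < 0.416. -/
/-!
Substituting `s = √(1 - ζ²)` turns `g₀` into `G0 s = artanh s - s - s³ / (1 + s²)`, because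
`artanh √(1 - t²) - √(1 - t²)` is an antiderivative of `-√(t⁻² - 1)`. The derivative
`2 s² ((1 + s²)² - 2) / ((1 - s²) (1 + s²)²)` of `G0` is positive exactly for `ζ < √(2 - √2)`,
so `ζ₀` corresponds to the zero `s₀` of an increasing function, and `l₀ = (1 - s₀²) / s₀`.
Taylor bounds for `exp` give `G0 0.8135 < 0 < G0 0.8137`, and `s ↦ (1 - s²) / s` maps
`(0.8135, 0.8137)` into `(0.415, 0.416)`.
-/

open Real Set Filter

theorem Real.hasDerivAt_artanh {x : ℝ} (hx : x ∈ Ioo (-1) 1) :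
    HasDerivAt artanh (1 - x ^ 2)⁻¹ x := by
  have h₁ : 0 < 1 + x := by linarith [hx.1]
  have h₂ : 0 < 1 - x := by linarith [hx.2]
  have hlog : ∀ y ∈ Ioo (-1 : ℝ) 1, artanh y = (log (1 + y) - log (1 - y)) / 2 := by
    intro y hy
    rw [artanh_eq_half_log (Ioo_subset_Icc_self hy),
      log_div (by linarith [hy.1]) (by linarith [hy.2])]
    ring
  have hderiv : HasDerivAt (fun y => (log (1 + y) - log (1 - y)) / 2)
      ((1 / (1 + x) - (-1) / (1 - x)) / 2) x := by
    have hp := ((hasDerivAt_id x).const_add 1).log h₁.ne'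
    have hm := ((hasDerivAt_id x).const_sub 1).log h₂.ne'
    simpa using (hp.sub hm).div_const 2
  refine (hderiv.congr_of_eventuallyEq
    (eventually_of_mem (Ioo_mem_nhds hx.1 hx.2) hlog)).congr_deriv ?_
  have h₃ : 1 - x ^ 2 = (1 + x) * (1 - x) := by ring
  rw [h₃]
  field_simp
  ring

theorem Real.continuousOn_artanh : ContinuousOn artanh (Ioo (-1) 1) :=
  fun _ hx => (hasDerivAt_artanh hx).continuousAt.continuousWithinAt

theorem integral_sqrt_inv_sq_sub_one {ζ : ℝ} (h0 : 0 < ζ) (h1 : ζ ≤ 1) :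
    ∫ t in ζ..1, √(1 / t ^ 2 - 1) = artanh √(1 - ζ ^ 2) - √(1 - ζ ^ 2) := by
  set F : ℝ → ℝ := fun t => √(1 - t ^ 2) - artanh √(1 - t ^ 2)
  have hmaps : ∀ t ∈ Icc ζ 1, √(1 - t ^ 2) ∈ Ioo (-1) 1 := by
    intro t ht
    have ht0 : 0 < t := h0.trans_le ht.1
    refine ⟨by linarith [sqrt_nonneg (1 - t ^ 2)], ?_⟩
    rw [sqrt_lt' one_pos]
    nlinarith
  have hs : Continuous fun t : ℝ => √(1 - t ^ 2) := by fun_prop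
  have hcont : ContinuousOn F (Icc ζ 1) :=
    hs.continuousOn.sub (continuousOn_artanh.comp hs.continuousOn hmaps)
  have hderiv : ∀ t ∈ Ioo ζ 1, HasDerivWithinAt F √(1 / t ^ 2 - 1) (Ioi t) t := by
    intro t ht
    have ht0 : 0 < t := h0.trans ht.1
    have hu : 0 < 1 - t ^ 2 := by nlinarith [ht.2]
    have hS : 0 < √(1 - t ^ 2) := sqrt_pos.mpr hu
    have hS2 : √(1 - t ^ 2) ^ 2 = 1 - t ^ 2 := sq_sqrt hu.le
    have hSd : HasDerivAt (fun s => √(1 - s ^ 2)) (-(2 * t) / (2 * √(1 - t ^ 2))) t := by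
      simpa using ((hasDerivAt_pow 2 t).const_sub 1).sqrt hu.ne'
    have hFd := hSd.sub ((hasDerivAt_artanh (hmaps t (Ioo_subset_Icc_self ht))).comp t hSd)
    refine (hFd.congr_deriv ?_).hasDerivWithinAt
    rw [hS2, sub_sub_cancel, show 1 / t ^ 2 - 1 = (1 - t ^ 2) / t ^ 2 by field_simp,
      sqrt_div hu.le, sqrt_sq ht0.le]
    field_simp
    linear_combination (-1) * hS2
  have hint : IntervalIntegrable (fun t => √(1 / t ^ 2 - 1)) MeasureTheory.volume ζ 1 := by
    refine ContinuousOn.intervalIntegrable fun t ht => ?_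
    rw [uIcc_of_le h1] at ht
    have ht0 : t ^ 2 ≠ 0 := pow_ne_zero 2 (h0.trans_le ht.1).ne'
    exact ((continuousAt_const.div (continuous_pow 2).continuousAt ht0).sub
      continuousAt_const).sqrt.continuousWithinAt
  rw [intervalIntegral.integral_eq_sub_of_hasDeriv_right_of_le h1 hcont hderiv hint]
  simp [F]

noncomputable def G0 (s : ℝ) : ℝ := artanh s - s - s ^ 3 / (1 + s ^ 2)

theorem g0_eq_G0_sqrt {ζ : ℝ} (h0 : 0 < ζ) (h1 : ζ ≤ 1) : g0 ζ = G0 √(1 - ζ ^ 2) := by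
  have hu : 0 ≤ 1 - ζ ^ 2 := by nlinarith
  have hpow : (1 - ζ ^ 2) ^ ((3 : ℝ) / 2) = √(1 - ζ ^ 2) ^ 3 := by
    rw [sqrt_eq_rpow, ← rpow_mul_natCast hu]
    norm_num
  rw [g0, G0, integral_sqrt_inv_sq_sub_one h0 h1, hpow, sq_sqrt hu]
  ring_nf

theorem hasDerivAt_G0 {s : ℝ} (hs : s ∈ Ioo (-1) 1) :
    HasDerivAt G0 (2 * s ^ 2 * ((1 + s ^ 2) ^ 2 - 2) / ((1 - s ^ 2) * (1 + s ^ 2) ^ 2)) s := by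
  have hq : 1 + s ^ 2 ≠ 0 := by positivity
  have hu : 1 - s ^ 2 ≠ 0 := by nlinarith [hs.1, hs.2]
  have hcube := ((hasDerivAt_pow 3 s).div ((hasDerivAt_pow 2 s).const_add 1) hq)
  refine (((hasDerivAt_artanh hs).sub (hasDerivAt_id s)).sub hcube).congr_deriv ?_
  field_simp
  ring

theorem strictMonoOn_G0 : StrictMonoOn G0 (Ioo √(√2 - 1) 1) := by
  have hsub : Ioo √(√2 - 1) 1 ⊆ Ioo (-1) 1 :=
    Ioo_subset_Ioo_left (by linarith [sqrt_nonneg (√2 - 1)])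
  refine strictMonoOn_of_deriv_pos (convex_Ioo _ _)
    (fun s hs => (hasDerivAt_G0 (hsub hs)).continuousAt.continuousWithinAt) fun s hs => ?_
  rw [interior_Ioo] at hs
  rw [(hasDerivAt_G0 (hsub hs)).deriv]
  have hs0 : 0 < s := (sqrt_nonneg _).trans_lt hs.1
  have hs2 : √2 < 1 + s ^ 2 := by
    have := (sqrt_lt' hs0).mp hs.1
    linarith
  have hgap : 0 < (1 + s ^ 2) ^ 2 - 2 := by
    nlinarith [sq_sqrt (zero_le_two : (0 : ℝ) ≤ 2), sqrt_nonneg 2]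
  have hu : 0 < 1 - s ^ 2 := by nlinarith [hs.2]
  positivity

theorem Real.artanh_lt_of_lt_exp_sq {x y : ℝ} (hx : x ∈ Ioo (-1) 1)
    (h : (1 + x) / (1 - x) < exp y ^ 2) : artanh x < y := by
  have hr : 0 < (1 + x) / (1 - x) := div_pos (by linarith [hx.1]) (by linarith [hx.2])
  rwa [artanh, log_lt_iff_lt_exp (sqrt_pos.mpr hr), sqrt_lt' (exp_pos y)]

theorem Real.lt_artanh_of_exp_sq_lt {x y : ℝ} (hx : x ∈ Ioo (-1) 1)
    (h : exp y ^ 2 < (1 + x) / (1 - x)) : y < artanh x := by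
  have hr : 0 < (1 + x) / (1 - x) := div_pos (by linarith [hx.1]) (by linarith [hx.2])
  rwa [artanh, lt_log_iff_exp_lt (sqrt_pos.mpr hr), lt_sqrt (exp_pos y).le]

theorem lt_exp_0_5687 : 1.76596 < exp 0.5687 := by
  refine lt_of_lt_of_le ?_ (sum_le_exp_of_nonneg (by norm_num) 10)
  simp only [Finset.sum_range_succ, Finset.sum_range_zero, Nat.factorial]
  norm_num

theorem exp_0_56893_lt : exp 0.56893 < 1.76638 := by
  refine lt_of_le_of_lt (exp_bound' (by norm_num) (by norm_num) (n := 10) (by norm_num)) ?_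
  simp only [Finset.sum_range_succ, Finset.sum_range_zero, Nat.factorial]
  norm_num

theorem G0_lt_zero : G0 0.8135 < 0 := by
  have hart : artanh 0.8135 < 1.1374 := by
    refine artanh_lt_of_lt_exp_sq (by norm_num) ?_
    rw [show (1.1374 : ℝ) = (2 : ℕ) * 0.5687 by norm_num, exp_nat_mul]
    calc (1 + 0.8135) / (1 - 0.8135) < ((1.76596 : ℝ) ^ 2) ^ 2 := by norm_num
      _ < (exp 0.5687 ^ 2) ^ 2 := by gcongr; exact lt_exp_0_5687
  rw [G0]
  norm_num
  linarith

theorem G0_pos : 0 < G0 0.8137 := by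
  have hart : 1.13786 < artanh 0.8137 := by
    refine lt_artanh_of_exp_sq_lt (by norm_num) ?_
    rw [show (1.13786 : ℝ) = (2 : ℕ) * 0.56893 by norm_num, exp_nat_mul]
    calc (exp 0.56893 ^ 2) ^ 2 < ((1.76638 : ℝ) ^ 2) ^ 2 := by gcongr; exact exp_0_56893_lt
      _ < (1 + 0.8137) / (1 - 0.8137) := by norm_num
  rw [G0]
  norm_num
  linarith

theorem sqrt_one_sub_sq_mem {ζ : ℝ} (hζ : ζ ∈ Ioo 0 √(2 - √2)) :
    √(1 - ζ ^ 2) ∈ Ioo √(√2 - 1) 1 := by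
  have hζ2 : ζ ^ 2 < 2 - √2 := (lt_sqrt hζ.1.le).mp hζ.2
  constructor
  · exact sqrt_lt_sqrt (by linarith [one_lt_sqrt_two]) (by linarith)
  · rw [sqrt_lt' one_pos]
    nlinarith [hζ.1]

/-- With `ζ₀` the unique zero of `g₀` in `(0, √(2−√2))` and `l₀ = ζ₀²/√(1−ζ₀²)`,
one has `0.415 < l₀ < 0.416`. -/
theorem stmt14 :
    ∀ ζ₀ ∈ Set.Ioo (0 : ℝ) (Real.sqrt (2 - Real.sqrt 2)), g0 ζ₀ = 0 →
      0.415 < ζ₀ ^ 2 / Real.sqrt (1 - ζ₀ ^ 2)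
        ∧ ζ₀ ^ 2 / Real.sqrt (1 - ζ₀ ^ 2) < 0.416 := by
  intro ζ hζ hg
  have hs := sqrt_one_sub_sq_mem hζ
  set s := √(1 - ζ ^ 2)
  have hζs : ζ ^ 2 = 1 - s ^ 2 := by
    rw [sq_sqrt (by nlinarith [(lt_sqrt hζ.1.le).mp hζ.2, one_lt_sqrt_two])]
    ring
  have hGs : G0 s = 0 := by
    rwa [← g0_eq_G0_sqrt hζ.1 (by nlinarith [hζs, sqrt_nonneg (1 - ζ ^ 2)])]
  have hmem : ∀ a : ℝ, 0.8 < a → a < 1 → a ∈ Ioo √(√2 - 1) 1 := fun a ha ha' =>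
    ⟨(sqrt_lt' (by linarith)).mpr (by nlinarith [sqrt_two_lt_three_halves]), ha'⟩
  have hlo : 0.8135 < s := by
    refine (strictMonoOn_G0.lt_iff_lt (hmem _ (by norm_num) (by norm_num)) hs).mp ?_
    linarith [G0_lt_zero]
  have hhi : s < 0.8137 := by
    refine (strictMonoOn_G0.lt_iff_lt hs (hmem _ (by norm_num) (by norm_num))).mp ?_
    linarith [G0_pos]
  rw [hζs]
  constructor
  · rw [lt_div_iff₀ (by linarith)]
    nlinarith
  · rw [div_lt_iff₀ (by linarith)]
    nlinarith
end
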